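/- Double-bounded key identity for Schur's theorem: for all nonnegative integers j, k, L, M, ∑_{b,c,bc ≥ 0, b+bc=j, c+bc=k} q^{T_{b+c+bc} + T_{bc}} [L-k choose j-bc]_q [M-j choose k-bc]_q [M-b-c-bc choose bc]_q = q^{T_j + T_k} [L choose j]_q [M-j choose k]_q. -/

import Mathlib

open Finset

noncomputable section

abbrev K : Type := RatFunc ℚ

def q : K := RatFunc.X

/-- Extended q-Pochhammer symbol `(a;q)_n` for integer `n`. -/
def poch (a : K) (n : ℤ) : K :=
  if 0 ≤ n then ∏ j ∈ Finset.range n.toNat, (1 - a * q ^ j)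
  else (∏ j ∈ Finset.range (-n).toNat, (1 - a * q ^ (-(j + 1 : ℤ))))⁻¹

/-- Extended Gaussian binomial coefficient `[n choose m]_q`. -/
def qbinom (n m : ℤ) : K :=
  if 0 ≤ m then poch (q ^ (n - m + 1)) m / poch q m else 0

/-- Triangular number `T_n = n(n+1)/2`. -/
def T (n : ℤ) : ℤ := n * (n + 1) / 2

/-! The constraints force `b = j - bc` and `c = k - bc`, so the triple sum is a single sum over
`i = bc`. The q-trinomial identity `[M-j, k-i] [M-j-k+i, i] = [M-j, k] [k, i]` pulls `[M-j, k]`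
out of every term, and `T (j+k-i) + T i = T j + T k + (j-i)(k-i)` pulls out `q ^ (T j + T k)`.
What remains, `∑ i, q ^ ((j-i)(k-i)) [L-k, j-i] [k, i]`, is the q-Vandermonde sum for `[L, j]`. -/

lemma q_ne_zero : q ≠ 0 := RatFunc.X_ne_zero

lemma q_pow_ne_one {n : ℕ} (hn : n ≠ 0) : q ^ n ≠ 1 := by
  intro h
  have hX : (Polynomial.X ^ n : Polynomial ℚ) = 1 :=
    RatFunc.algebraMap_injective ℚ (by simpa [q] using h)
  simpa [hn] using congrArg Polynomial.natDegree hX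

lemma q_zpow_ne_one {t : ℤ} (ht : t ≠ 0) : q ^ t ≠ 1 := by
  obtain ⟨n, rfl | rfl⟩ := Int.eq_nat_or_neg t
  · simpa using q_pow_ne_one (n := n) (by omega)
  · simpa using q_pow_ne_one (n := n) (by omega)

lemma one_sub_q_zpow_ne_zero {t : ℤ} (ht : t ≠ 0) : 1 - q ^ t ≠ 0 :=
  sub_ne_zero.mpr (q_zpow_ne_one ht).symm

lemma q_zpow_mul_pow (s : ℤ) (i : ℕ) : q ^ s * q ^ i = q ^ (s + i) := by
  rw [← zpow_natCast, ← zpow_add₀ q_ne_zero]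

lemma poch_natCast (a : K) (n : ℕ) : poch a n = ∏ i ∈ range n, (1 - a * q ^ i) := by
  rw [poch, if_pos n.cast_nonneg, Int.toNat_natCast]

lemma poch_succ (a : K) (n : ℕ) : poch a (n + 1 : ℕ) = poch a n * (1 - a * q ^ n) := by
  rw [poch_natCast, poch_natCast, prod_range_succ]

lemma poch_succ' (a : K) (n : ℕ) : poch a (n + 1 : ℕ) = (1 - a) * poch (a * q) n := by
  rw [poch_natCast, poch_natCast, prod_range_succ', mul_comm]
  simp only [pow_succ', mul_assoc, pow_zero, mul_one]

lemma poch_add (a : K) (m n : ℕ) : poch a (m + n : ℕ) = poch a m * poch (a * q ^ m) n := by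
  simp only [poch_natCast, prod_range_add, pow_add, mul_assoc]

lemma poch_q_zpow_ne_zero {s : ℤ} (hs : 0 < s) (n : ℕ) : poch (q ^ s) n ≠ 0 := by
  rw [poch_natCast, prod_ne_zero_iff]
  intro i _
  rw [q_zpow_mul_pow]
  exact one_sub_q_zpow_ne_zero (by omega)

lemma poch_q_ne_zero (n : ℕ) : poch q n ≠ 0 := by
  simpa using poch_q_zpow_ne_zero one_pos n

lemma qbinom_natCast (n : ℤ) (m : ℕ) : qbinom n m = poch (q ^ (n - m + 1)) m / poch q m := by
  simp [qbinom]

lemma qbinom_zero (n : ℤ) : qbinom n 0 = 1 := by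
  simp [qbinom, poch]

lemma qbinom_of_neg (n : ℤ) {m : ℤ} (hm : m < 0) : qbinom n m = 0 := by
  simp [qbinom, hm]

lemma qbinom_of_lt {n m : ℤ} (hn : 0 ≤ n) (hnm : n < m) : qbinom n m = 0 := by
  lift m to ℕ using by omega
  lift n to ℕ using hn
  rw [qbinom_natCast, poch_natCast,
    prod_eq_zero (mem_range.mpr (show m - n - 1 < m by omega)), zero_div]
  rw [q_zpow_mul_pow, show (n : ℤ) - m + 1 + (m - n - 1 : ℕ) = 0 by omega, zpow_zero, sub_self]

lemma qbinom_succ (n m : ℤ) : qbinom (n + 1) m = q ^ m * qbinom n m + qbinom n (m - 1) := by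
  rcases lt_trichotomy m 0 with hm | rfl | hm
  · simp [qbinom_of_neg _ hm, qbinom_of_neg _ (show m - 1 < 0 by omega)]
  · simp [qbinom_zero, qbinom_of_neg]
  lift m to ℕ using hm.le
  obtain ⟨t, rfl⟩ : ∃ t, m = t + 1 := ⟨m - 1, by omega⟩
  have hnum :
      poch (q ^ (n - t + 1)) (t + 1 : ℕ) = poch (q ^ (n - t + 1)) t * (1 - q ^ (n + 1)) := by
    rw [poch_succ, q_zpow_mul_pow]; ring_nf
  have hnum' :
      poch (q ^ (n - t)) (t + 1 : ℕ) = (1 - q ^ (n - t)) * poch (q ^ (n - t + 1)) t := by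
    rw [poch_succ', ← zpow_add_one₀ q_ne_zero]
  have hden : poch q (t + 1 : ℕ) = poch q t * (1 - q ^ ((t : ℤ) + 1)) := by
    rw [poch_succ, mul_comm q, ← zpow_natCast, ← zpow_add_one₀ q_ne_zero]
  have hq : q ^ ((t : ℤ) + 1) * q ^ (n - t) = q ^ (n + 1) := by
    rw [← zpow_add₀ q_ne_zero]; ring_nf
  have h1 := poch_q_ne_zero t
  have h2 : 1 - q ^ ((t : ℤ) + 1) ≠ 0 := one_sub_q_zpow_ne_zero (by omega)
  rw [qbinom_natCast, qbinom_natCast, show ((t + 1 : ℕ) : ℤ) - 1 = t by push_cast; ring,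
    qbinom_natCast,
    show n + 1 - (t + 1 : ℕ) + 1 = n - t + 1 by push_cast; ring,
    show n - (t + 1 : ℕ) + 1 = n - t by push_cast; ring, hnum, hnum', hden, Nat.cast_succ, ← hq]
  field_simp
  ring

lemma qbinom_mul_qbinom_sub (n : ℤ) (a b : ℕ) :
    qbinom n a * qbinom (n - a) b = qbinom n (a + b : ℕ) * qbinom (a + b : ℕ) b := by
  have hsplit : poch (q ^ (n - a - b + 1)) (a + b : ℕ)
      = poch (q ^ (n - a - b + 1)) b * poch (q ^ (n - a + 1)) a := by
    rw [add_comm a, poch_add, q_zpow_mul_pow]; ring_nf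
  have hsplit' : poch q (a + b : ℕ) = poch q a * poch (q ^ ((a : ℤ) + 1)) b := by
    rw [poch_add, ← pow_succ', ← zpow_natCast, Nat.cast_succ, mul_comm]
  have ha := poch_q_ne_zero a
  have hb := poch_q_ne_zero b
  have hab : poch (q ^ ((a : ℤ) + 1)) b ≠ 0 := poch_q_zpow_ne_zero (by omega) b
  rw [qbinom_natCast, qbinom_natCast, qbinom_natCast, qbinom_natCast,
    show n - (a + b : ℕ) + 1 = n - a - b + 1 by push_cast; ring,
    show ((a + b : ℕ) : ℤ) - b + 1 = a + 1 by push_cast; ring, hsplit, hsplit']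
  field_simp

lemma qbinom_vandermonde (m : ℤ) (n r : ℕ) :
    ∑ a ∈ range (r + 1), q ^ ((a : ℤ) * (n - r + a)) * qbinom m a * qbinom n ((r : ℤ) - a)
      = qbinom (m + n) r := by
  induction n generalizing r with
  | zero =>
    rw [sum_eq_single_of_mem r (self_mem_range_succ r)]
    · simp [qbinom_zero]
    · intro a ha hne
      rw [Nat.cast_zero, qbinom_of_lt le_rfl (by have := mem_range.mp ha; omega), mul_zero]
  | succ n ih =>
    have hpascal : ∀ a ∈ range (r + 1),
        q ^ ((a : ℤ) * ((n + 1 : ℕ) - r + a)) * qbinom m a *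
            qbinom (n + 1 : ℕ) ((r : ℤ) - a)
          = q ^ (r : ℤ) * (q ^ ((a : ℤ) * (n - r + a)) * qbinom m a * qbinom n ((r : ℤ) - a))
            + q ^ ((a : ℤ) * (n - (r - 1) + a)) * qbinom m a * qbinom n ((r : ℤ) - 1 - a) := by
      intro a _
      have hexp : q ^ ((a : ℤ) * (n + 1 - r + a)) * q ^ ((r : ℤ) - a)
          = q ^ (r : ℤ) * q ^ ((a : ℤ) * (n - r + a)) := by
        rw [← zpow_add₀ q_ne_zero, ← zpow_add₀ q_ne_zero]; ring_nf
      rw [Nat.cast_succ, qbinom_succ, sub_right_comm,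
        show (a : ℤ) * (n - (r - 1) + a) = a * (n + 1 - r + a) by ring]
      linear_combination (qbinom m a * qbinom n ((r : ℤ) - a)) * hexp
    have hshift : ∑ a ∈ range (r + 1),
        q ^ ((a : ℤ) * (n - (r - 1) + a)) * qbinom m a * qbinom n ((r : ℤ) - 1 - a)
          = qbinom (m + n) ((r : ℤ) - 1) := by
      cases r with
      | zero => simp [qbinom_of_neg]
      | succ s =>
        rw [sum_range_succ,
          qbinom_of_neg _ (by omega : ((s + 1 : ℕ) : ℤ) - 1 - (s + 1 : ℕ) < 0), mul_zero,
          add_zero, show ((s + 1 : ℕ) : ℤ) - 1 = s by push_cast; ring, ih s]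
    rw [sum_congr rfl hpascal, sum_add_distrib, ← mul_sum, ih, hshift, Nat.cast_succ,
      ← add_assoc, qbinom_succ]

lemma qbinom_add_eq_sum (m : ℤ) (n r : ℕ) :
    qbinom (m + n) r = ∑ i ∈ range (min r n + 1),
      q ^ (((r : ℤ) - i) * ((n : ℤ) - i)) * qbinom m ((r : ℤ) - i) * qbinom n i := by
  have hvanish : ∀ i ∈ range (r + 1), i ∉ range (min r n + 1) →
      q ^ (((r : ℤ) - i) * ((n : ℤ) - i)) * qbinom m ((r : ℤ) - i) * qbinom n i = 0 := by
    intro i hir hi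
    rw [mem_range] at hir hi
    rw [qbinom_of_lt n.cast_nonneg (by omega), mul_zero]
  rw [sum_subset (range_subset_range.mpr (by omega)) hvanish, ← sum_range_reflect,
    ← qbinom_vandermonde]
  refine sum_congr rfl fun a ha => ?_
  rw [add_tsub_cancel_right, Nat.cast_sub (by have := mem_range.mp ha; omega)]
  ring_nf

lemma two_mul_T (n : ℤ) : 2 * T n = n * (n + 1) :=
  Int.mul_ediv_cancel' (Int.even_mul_succ_self n).two_dvd

lemma T_add_sub_add_T (x y z : ℤ) : T (x + y - z) + T z = T x + T y + (x - z) * (y - z) := by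
  apply mul_left_cancel₀ (two_ne_zero (α := ℤ))
  linear_combination two_mul_T (x + y - z) + two_mul_T z - two_mul_T x - two_mul_T y

lemma sum_range_sum_range_sum_range_ite_add_eq {M : Type*} [AddCommMonoid M] (j k : ℕ)
    (f : ℕ → ℕ → ℕ → M) :
    ∑ b ∈ range (j + 1), ∑ c ∈ range (k + 1), ∑ i ∈ range (min j k + 1),
      (if b + i = j ∧ c + i = k then f b c i else 0)
      = ∑ i ∈ range (min j k + 1), f (j - i) (k - i) i := by
  simp_rw [sum_comm (s := range (k + 1)), sum_comm (s := range (j + 1))]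
  refine sum_congr rfl fun i hi => ?_
  have hi' := mem_range.mp hi
  have hij : ∀ b, b + i = j ↔ b = j - i := by omega
  have hik : ∀ c, c + i = k ↔ c = k - i := by omega
  simp only [hij, hik, ite_and, sum_ite_eq', mem_range, show j - i < j + 1 by omega,
    show k - i < k + 1 by omega, if_true]

theorem schur_double_bounded (j k L M : ℕ) :
    (∑ b ∈ Finset.range (j + 1), ∑ c ∈ Finset.range (k + 1),
      ∑ bc ∈ Finset.range (min j k + 1),
        if b + bc = j ∧ c + bc = k then
          q ^ (T ((b : ℤ) + c + bc) + T (bc : ℤ)) *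
            qbinom ((L : ℤ) - k) ((j : ℤ) - bc) * qbinom ((M : ℤ) - j) ((k : ℤ) - bc) *
            qbinom ((M : ℤ) - b - c - bc) (bc : ℤ)
        else 0) =
      q ^ (T (j : ℤ) + T (k : ℤ)) * qbinom (L : ℤ) (j : ℤ) * qbinom ((M : ℤ) - j) (k : ℤ) := by
  rw [sum_range_sum_range_sum_range_ite_add_eq]
  calc _ = ∑ i ∈ range (min j k + 1), q ^ (T j + T k) * qbinom ((M : ℤ) - j) k *
          (q ^ (((j : ℤ) - i) * ((k : ℤ) - i)) * qbinom ((L : ℤ) - k) ((j : ℤ) - i) *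
            qbinom k i) := by
        refine sum_congr rfl fun i hi => ?_
        have hij : i ≤ j := by have := mem_range.mp hi; omega
        have hik : i ≤ k := by have := mem_range.mp hi; omega
        have htrinomial := qbinom_mul_qbinom_sub ((M : ℤ) - j) (k - i) i
        rw [Nat.sub_add_cancel hik, Nat.cast_sub hik] at htrinomial
        rw [Nat.cast_sub hij, Nat.cast_sub hik,
          show (j : ℤ) - i + (k - i) + i = j + k - i by ring, T_add_sub_add_T,
          zpow_add₀ q_ne_zero,
          show (M : ℤ) - (j - i) - (k - i) - i = M - j - (k - i) by ring]
        linear_combination (q ^ (T j + T k) * q ^ (((j : ℤ) - i) * ((k : ℤ) - i)) *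
          qbinom ((L : ℤ) - k) ((j : ℤ) - i)) * htrinomial
    _ = _ := by rw [← mul_sum, ← qbinom_add_eq_sum, sub_add_cancel]; ring
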